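/- arXiv:2303.13630 — 3 statements merged into one kernel-verified Lean document; each statement's English description precedes it below -/
import Mathlib

section
/- Let p₁, p₂ ∈ ℝ², q ∈ ℝ², r > 0, and suppose for every γ ∈ {0, 1/3, 2/3, 1}, ‖γ·p₁ + (1-γ)·p₂ - q‖ ≥ r. If additionally ‖p₁ - p₂‖ ≤ L, then for every γ ∈ [0,1], ‖γ·p₁ + (1-γ)·p₂ - q‖ ≥ r - L/6. -/
theorem sampled_coordination_safety
    (p₁ p₂ q : EuclideanSpace ℝ (Fin 2)) (r L : ℝ)
    (hsafe : ∀ γ ∈ ({0, 1/3, 2/3, 1} : Set ℝ), ‖γ • p₁ + (1 - γ) • p₂ - q‖ ≥ r)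
    (hL : ‖p₁ - p₂‖ ≤ L) :
    ∀ γ ∈ Set.Icc (0 : ℝ) 1, ‖γ • p₁ + (1 - γ) • p₂ - q‖ ≥ r - L / 6 := by
  intro γ hγ
  obtain ⟨h0, h1⟩ := hγ
  have key : ∀ γ₀ : ℝ, γ₀ ∈ ({0, 1/3, 2/3, 1} : Set ℝ) → |γ - γ₀| ≤ 1/6 →
      ‖γ • p₁ + (1 - γ) • p₂ - q‖ ≥ r - L / 6 := by
    intro γ₀ hmem hdist
    have hs := hsafe γ₀ hmem
    have hdecomp : γ • p₁ + (1 - γ) • p₂ - q =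
        (γ₀ • p₁ + (1 - γ₀) • p₂ - q) + (γ - γ₀) • (p₁ - p₂) := by
      rw [smul_sub]
      module
    have hb : ‖(γ - γ₀) • (p₁ - p₂)‖ ≤ L / 6 := by
      rw [norm_smul, Real.norm_eq_abs]
      have hnn : (0:ℝ) ≤ ‖p₁ - p₂‖ := norm_nonneg _
      calc |γ - γ₀| * ‖p₁ - p₂‖ ≤ (1/6) * L := by
            apply mul_le_mul hdist hL hnn (by norm_num)
        _ = L / 6 := by ring
    calc ‖γ • p₁ + (1 - γ) • p₂ - q‖
        ≥ ‖γ₀ • p₁ + (1 - γ₀) • p₂ - q‖ - ‖(γ - γ₀) • (p₁ - p₂)‖ := by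
          rw [hdecomp]
          have := norm_add_le_of_le (le_refl ‖γ₀ • p₁ + (1 - γ₀) • p₂ - q‖)
            (le_refl ‖(γ - γ₀) • (p₁ - p₂)‖)
          have h := norm_le_insert' (γ₀ • p₁ + (1 - γ₀) • p₂ - q)
            (-((γ - γ₀) • (p₁ - p₂)))
          simp only [sub_neg_eq_add, norm_neg] at h
          linarith
      _ ≥ r - L / 6 := by linarith
  by_cases hc1 : γ ≤ 1/6
  · exact key 0 (by simp) (by rw [abs_of_nonneg (by linarith)]; linarith)
  · by_cases hc2 : γ ≤ 1/2
    · refine key (1/3) (by simp) ?_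
      rw [abs_le]; constructor <;> linarith
    · by_cases hc3 : γ ≤ 5/6
      · refine key (2/3) (by simp) ?_
        rw [abs_le]; constructor <;> linarith
      · refine key 1 (by simp) ?_
        rw [abs_le]; constructor <;> linarith
end

section
/- Let p₁, p₂ : ℝ → ℝ² be differentiable, and define v(t) = ‖p₁(t) - p₂(t)‖² - ψ. If v(0) = 0 and v'(t) ≥ -α·(v(t) + εψ) and -v'(t) ≥ -α·(-v(t) + εψ) for all t ≥ 0 (the two ISSf-CBF conditions with equal rates α > 0, ε > 0), then |v(t)| ≤ εψ for all t ≥ 0, i.e., |‖p₁(t) - p₂(t)‖² - ψ| ≤ εψ. -/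
open Real

lemma aux_mono (f : ℝ → ℝ) (hf : Differentiable ℝ f)
    (h' : ∀ t : ℝ, 0 ≤ t → 0 ≤ deriv f t) :
    ∀ t : ℝ, 0 ≤ t → f 0 ≤ f t := by
  intro t ht
  have : MonotoneOn f (Set.Ici (0:ℝ)) := by
    apply monotoneOn_of_deriv_nonneg (convex_Ici 0) hf.continuous.continuousOn
      (hf.differentiableOn.mono interior_subset)
    intro x hx
    exact h' x (le_of_lt (by simpa using hx))
  exact this (Set.self_mem_Ici) ht ht

theorem issf_holonomic_band
    (p₁ p₂ : ℝ → EuclideanSpace ℝ (Fin 2)) (ψ ε α : ℝ)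
    (hψ : 0 < ψ) (hε : 0 < ε) (hα : 0 < α)
    (hp₁ : Differentiable ℝ p₁) (hp₂ : Differentiable ℝ p₂)
    (v : ℝ → ℝ) (hv : v = fun t => ‖p₁ t - p₂ t‖ ^ 2 - ψ)
    (h0 : v 0 = 0)
    (hineq1 : ∀ t : ℝ, 0 ≤ t → deriv v t ≥ -α * (v t + ε * ψ))
    (hineq2 : ∀ t : ℝ, 0 ≤ t → -deriv v t ≥ -α * (-v t + ε * ψ)) :
    ∀ t : ℝ, 0 ≤ t → |v t| ≤ ε * ψ := by
  have hdv : Differentiable ℝ v := by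
    have h1 : Differentiable ℝ (fun t => p₁ t - p₂ t) := hp₁.sub hp₂
    have h2 : Differentiable ℝ (fun t => (inner ℝ (p₁ t - p₂ t) (p₁ t - p₂ t) : ℝ)) :=
      h1.inner ℝ h1
    rw [hv]
    have heq : (fun t => ‖p₁ t - p₂ t‖ ^ 2 - ψ)
        = fun t => (inner ℝ (p₁ t - p₂ t) (p₁ t - p₂ t) : ℝ) - ψ := by
      funext t
      rw [real_inner_self_eq_norm_sq]
    rw [heq]
    exact h2.sub_const ψ
  -- derivatives of the auxiliary functions
  have hF : ∀ t : ℝ, HasDerivAt (fun s => Real.exp (α * s) * (v s + ε * ψ))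
      (α * Real.exp (α * t) * (v t + ε * ψ) + Real.exp (α * t) * deriv v t) t := by
    intro t
    have he : HasDerivAt (fun s => Real.exp (α * s)) (Real.exp (α * t) * α) t :=
      (Real.hasDerivAt_exp (α * t)).comp t (by simpa using (hasDerivAt_id t).const_mul α)
    have hg : HasDerivAt (fun s => v s + ε * ψ) (deriv v t) t :=
      ((hdv t).hasDerivAt).add_const _
    have := he.mul hg
    exact this.congr_deriv (by ring)
  have hG : ∀ t : ℝ, HasDerivAt (fun s => Real.exp (α * s) * (ε * ψ - v s))
      (α * Real.exp (α * t) * (ε * ψ - v t) - Real.exp (α * t) * deriv v t) t := by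
    intro t
    have he : HasDerivAt (fun s => Real.exp (α * s)) (Real.exp (α * t) * α) t :=
      (Real.hasDerivAt_exp (α * t)).comp t (by simpa using (hasDerivAt_id t).const_mul α)
    have hg : HasDerivAt (fun s => ε * ψ - v s) (-deriv v t) t :=
      ((hdv t).hasDerivAt).const_sub _
    have := he.mul hg
    exact this.congr_deriv (by ring)
  have hεψ : 0 < ε * ψ := mul_pos hε hψ
  -- lower bound: v t ≥ -εψ
  have hlow : ∀ t : ℝ, 0 ≤ t → -(ε * ψ) ≤ v t := by
    intro t ht
    have hmono := aux_mono (fun s => Real.exp (α * s) * (v s + ε * ψ))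
      (fun s => (hF s).differentiableAt)
      (fun s hs => by
        rw [(hF s).deriv]
        have h1 := hineq1 s hs
        have hexp : (0:ℝ) < Real.exp (α * s) := Real.exp_pos _
        nlinarith [hexp, h1]) t ht
    simp only [h0, mul_zero, Real.exp_zero, zero_add, one_mul] at hmono
    have hexp : (0:ℝ) < Real.exp (α * t) := Real.exp_pos _
    nlinarith [hmono, hexp, hεψ]
  -- upper bound: v t ≤ εψ
  have hup : ∀ t : ℝ, 0 ≤ t → v t ≤ ε * ψ := by
    intro t ht
    have hmono := aux_mono (fun s => Real.exp (α * s) * (ε * ψ - v s))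
      (fun s => (hG s).differentiableAt)
      (fun s hs => by
        rw [(hG s).deriv]
        have h2 := hineq2 s hs
        have hexp : (0:ℝ) < Real.exp (α * s) := Real.exp_pos _
        nlinarith [hexp, h2]) t ht
    simp only [h0, mul_zero, Real.exp_zero, sub_zero, one_mul] at hmono
    have hexp : (0:ℝ) < Real.exp (α * t) := Real.exp_pos _
    nlinarith [hmono, hexp, hεψ]
  intro t ht
  rw [abs_le]
  exact ⟨hlow t ht, hup t ht⟩
end

section
/- The closed-form CBF-QP controller u*(x) = u_d if aᵀu_d ≥ b, else u_d + ((b - aᵀu_d)/(aᵀP⁻¹a))·P⁻¹a (viewed as a function of (u_d, b) for fixed a ≠ 0 and P positive definite) is Lipschitz continuous in (u_d, b). -/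
open Matrix
open scoped Classical

noncomputable def cbfQPSol {m : ℕ} (P : Matrix (Fin m) (Fin m) ℝ)
    (a ud : Fin m → ℝ) (b : ℝ) : Fin m → ℝ :=
  if a ⬝ᵥ ud ≥ b then ud
  else ud + ((b - a ⬝ᵥ ud) / (a ⬝ᵥ P⁻¹.mulVec a)) • P⁻¹.mulVec a

private lemma lipschitz_smul_const {α : Type*} [PseudoMetricSpace α] {K : NNReal}
    {f : α → ℝ} (hf : LipschitzWith K f) {n : ℕ} (w : Fin n → ℝ) :
    LipschitzWith (K * ‖w‖₊) (fun x => f x • w) := by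
  apply LipschitzWith.of_dist_le_mul
  intro x y
  have : dist (f x • w) (f y • w) = dist (f x) (f y) * ‖w‖ := by
    rw [dist_eq_norm, dist_eq_norm, ← sub_smul, norm_smul, Real.norm_eq_abs]
  rw [this]
  calc dist (f x) (f y) * ‖w‖ ≤ (K * dist x y) * ‖w‖ := by
        apply mul_le_mul_of_nonneg_right (hf.dist_le_mul x y) (norm_nonneg w)
    _ = ↑(K * ‖w‖₊) * dist x y := by
        push_cast; ring

theorem cbf_qp_lipschitz
    {m : ℕ} (P : Matrix (Fin m) (Fin m) ℝ) (hP : P.PosDef) (hPsymm : P.IsSymm)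
    (a : Fin m → ℝ) (ha : a ≠ 0) :
    ∃ K : NNReal, LipschitzWith K (fun p : (Fin m → ℝ) × ℝ => cbfQPSol P a p.1 p.2) := by
  set v : Fin m → ℝ := P⁻¹.mulVec a with hv
  set c : ℝ := a ⬝ᵥ v with hcdef
  have hc : 0 < c := by
    have h := (hP.inv).dotProduct_mulVec_pos ha
    simpa [hcdef, hv, Matrix.mulVec] using h
  -- linear map L p = p.2 - a ⬝ᵥ p.1
  let L : ((Fin m → ℝ) × ℝ) →ₗ[ℝ] ℝ :=
  { toFun := fun p => p.2 - a ⬝ᵥ p.1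
    map_add' := by
      intro p q
      simp [dotProduct_add]
      ring
    map_smul' := by
      intro r p
      simp [dotProduct_smul, smul_eq_mul]
      ring }
  let Lc := LinearMap.toContinuousLinearMap L
  have hL : LipschitzWith ‖Lc‖₊ Lc := Lc.lipschitz
  have hmax : LipschitzWith 1 (fun x : ℝ => max 0 x) := by
    apply LipschitzWith.of_dist_le_mul
    intro x y
    simp only [NNReal.coe_one, one_mul, Real.dist_eq]
    rw [max_comm 0 x, max_comm 0 y]
    exact abs_max_sub_max_le_abs x y 0
  have hg : LipschitzWith (1 * ‖Lc‖₊) (fun p => max 0 (Lc p)) := hmax.comp hL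
  set w : Fin m → ℝ := c⁻¹ • v with hw
  have h2 : LipschitzWith ((1 * ‖Lc‖₊) * ‖w‖₊) (fun p => (max 0 (Lc p)) • w) :=
    lipschitz_smul_const hg w
  have h1 : LipschitzWith 1 (fun p : (Fin m → ℝ) × ℝ => p.1) := LipschitzWith.prod_fst
  refine ⟨1 + (1 * ‖Lc‖₊) * ‖w‖₊, ?_⟩
  have hfun : (fun p : (Fin m → ℝ) × ℝ => cbfQPSol P a p.1 p.2)
      = fun p => p.1 + (max 0 (Lc p)) • w := by
    funext p
    have hLval : Lc p = p.2 - a ⬝ᵥ p.1 := rfl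
    unfold cbfQPSol
    split_ifs with h
    · have : max 0 (Lc p) = 0 := by
        rw [hLval]; exact max_eq_left (by linarith)
      simp [this]
    · push_neg at h
      have : max 0 (Lc p) = p.2 - a ⬝ᵥ p.1 := by
        rw [hLval]; exact max_eq_right (by linarith)
      rw [this, hw]
      rw [smul_smul, div_eq_mul_inv, mul_comm]
  rw [hfun]
  exact h1.add h2
end
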